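/- The number of closed components of the mirror-curve obtained from the rectangular grid RG[p,q] with no internal mirrors equals gcd(p,q). -/

import Mathlib

/-! Mirror-curves on the rectangular grid `RG[p,q]`, in doubled integer coordinates:
edge midpoints of the grid are the points `(x, y)` with `0 ≤ x ≤ 2p`, `0 ≤ y ≤ 2q` and
exactly one of `x`, `y` odd.  A mirror configuration `c` assigns to (internal) edge
midpoints `none` (no mirror: the curve passes straight through, a crossing site or a
traversed site) or `some b`, where `b = true` is the mirror label `2` (mirror collinear
with the edge) and `b = false` is the label `−2` (mirror perpendicular to the edge).
A state of the curve is a position (an edge midpoint) together with a diagonal direction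
`(±1, ±1)`; the dynamics reflects off boundary walls and off internal mirrors. -/

/-- The direction taken after the interaction at the current position: internal mirrors
reflect according to their orientation, and the boundary walls of the rectangle reflect
the corresponding coordinate of the direction. -/
def newDir (p q : ℕ) (c : ℤ × ℤ → Option Bool) (s : (ℤ × ℤ) × (ℤ × ℤ)) : ℤ × ℤ :=
  let x := s.1.1
  let y := s.1.2
  let d : ℤ × ℤ :=
    match c s.1 with
    | some b => if b = decide (x % 2 = 0) then (-s.2.1, s.2.2) else (s.2.1, -s.2.2)
    | none => s.2
  ((if x = 0 then 1 else if x = (2 * p : ℤ) then -1 else d.1),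
    (if y = 0 then 1 else if y = (2 * q : ℤ) then -1 else d.2))

/-- One step of the mirror-curve dynamics: move one diagonal step (from an edge midpoint
to a midpoint of an adjacent edge) in the reflected direction. -/
def mcStep (p q : ℕ) (c : ℤ × ℤ → Option Bool) (s : (ℤ × ℤ) × (ℤ × ℤ)) :
    (ℤ × ℤ) × (ℤ × ℤ) :=
  ((s.1.1 + (newDir p q c s).1, s.1.2 + (newDir p q c s).2), newDir p q c s)

/-- Valid states: the position is an edge midpoint of `RG[p,q]` (in doubled coordinates:
exactly one coordinate odd, within the rectangle), and the direction is diagonal. -/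
def MCValid (p q : ℕ) (s : (ℤ × ℤ) × (ℤ × ℤ)) : Prop :=
  0 ≤ s.1.1 ∧ s.1.1 ≤ 2 * p ∧ 0 ≤ s.1.2 ∧ s.1.2 ≤ 2 * q ∧
    (Odd s.1.1 ↔ ¬ Odd s.1.2) ∧ (s.2.1 = 1 ∨ s.2.1 = -1) ∧ (s.2.2 = 1 ∨ s.2.2 = -1)

/-- Two directed states lie on the same component of the mirror-curve if one follows the
other under the dynamics, or if one is the orientation reversal of the other. -/
def mcRel (p q : ℕ) (c : ℤ × ℤ → Option Bool) (a b : {s // MCValid p q s}) : Prop :=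
  mcStep p q c a.val = b.val ∨ (a.val.1 = b.val.1 ∧ a.val.2 = -b.val.2)

/-- The number of closed components of the mirror-curve determined by the configuration
`c` on `RG[p,q]`: the number of equivalence classes of directed states under the
equivalence generated by the dynamics and orientation reversal. -/
noncomputable def mcComponents (p q : ℕ) (c : ℤ × ℤ → Option Bool) : ℕ :=
  Nat.card (Quot (mcRel p q c))

/-! Unfold the billiard: reflecting the rectangle in its walls turns the bouncing motion in each
coordinate into unit-speed motion on a circle, `x ↦ ±x` on `ℤ / 4p` and `y ↦ ±y` on `ℤ / 4q`,
the sign being the outgoing direction. A trajectory thus becomes the orbit of a point of the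
torus `ℤ / 4p × ℤ / 4q` under `(u, v) ↦ (u + 1, v + 1)`, and by the Chinese remainder theorem two
points share an orbit iff their intercepts `v - u` agree modulo `gcd(4p, 4q) = 4 gcd(p, q)`.
Reversing the orientation negates the intercept, which is odd; the odd residues modulo
`4 gcd(p, q)` up to sign are represented exactly once by `1, 3, …, 2 gcd(p, q) - 1`. -/

namespace MirrorCurve

lemma exists_natCast_modEq_and_modEq {M N a b : ℤ} (hM : 0 < M) (hN : 0 < N)
    (h : a ≡ b [ZMOD M.gcd N]) : ∃ k : ℕ, (k : ℤ) ≡ a [ZMOD M] ∧ (k : ℤ) ≡ b [ZMOD N] := by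
  obtain ⟨t, ht⟩ := Int.modEq_iff_dvd.mp h
  set k₀ := a + M * M.gcdA N * t
  have hkM : k₀ ≡ a [ZMOD M] := Int.modEq_iff_dvd.mpr ⟨-(M.gcdA N * t), by ring⟩
  have hkN : k₀ ≡ b [ZMOD N] := Int.modEq_iff_dvd.mpr ⟨M.gcdB N * t, by
    linear_combination ht + t * Int.gcd_eq_gcd_ab M N⟩
  have hk : ((k₀ % (M * N)).toNat : ℤ) ≡ k₀ [ZMOD M * N] := by
    rw [Int.toNat_of_nonneg (Int.emod_nonneg _ (by positivity))]
    exact Int.mod_modEq _ _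
  exact ⟨_, (hk.of_mul_right N).trans hkM, (hk.of_mul_left M).trans hkN⟩

lemma iterate_modEq_add {α : Type*} (g : α → α) (f : α → ℤ) {N : ℤ}
    (h : ∀ a, f (g a) ≡ f a + 1 [ZMOD N]) (a : α) (n : ℕ) : f (g^[n] a) ≡ f a + n [ZMOD N] := by
  induction n with
  | zero => simp [Int.ModEq.refl]
  | succ n ih =>
    rw [Function.iterate_succ_apply', Nat.cast_succ, ← add_assoc]
    exact (h _).trans (ih.add_right 1)

lemma eq_of_modEq_or_modEq_neg {g i j : ℕ} (hi : i < g) (hj : j < g)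
    (h : (2 * i + 1 : ℤ) ≡ 2 * j + 1 [ZMOD 4 * g] ∨ (2 * i + 1 : ℤ) ≡ -(2 * j + 1) [ZMOD 4 * g]) :
    i = j := by
  rcases h with h | h <;> have := Int.eq_zero_of_abs_lt_dvd (Int.modEq_iff_dvd.mp h)
    (abs_lt.mpr ⟨by omega, by omega⟩) <;> omega

lemma exists_modEq_or_neg_modEq {g : ℕ} (hg : 0 < g) {z : ℤ} (hz : Odd z) :
    ∃ i : Fin g, z ≡ 2 * i + 1 [ZMOD 4 * g] ∨ -z ≡ 2 * i + 1 [ZMOD 4 * g] := by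
  set r := z % (4 * g)
  have hr₀ : 0 ≤ r := Int.emod_nonneg _ (by omega)
  have hr₁ : r < 4 * g := Int.emod_lt_of_pos _ (by omega)
  have hr₂ : r % 2 = 1 := by
    rw [Int.emod_emod_of_dvd _ ⟨2 * g, by ring⟩]
    exact Int.odd_iff.mp hz
  have hzr : z ≡ r [ZMOD 4 * g] := (Int.mod_modEq _ _).symm
  by_cases hr : r < 2 * g
  · refine ⟨⟨r.toNat / 2, by omega⟩, Or.inl (hzr.trans ?_)⟩
    rw [show (2 * ((r.toNat / 2 : ℕ) : ℤ) + 1) = r by omega]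
  · have : (4 * g - r).toNat < 2 * g := by omega
    refine ⟨⟨(4 * g - r).toNat / 2, by omega⟩, Or.inr (hzr.neg.trans ?_)⟩
    rw [show (2 * (((4 * g - r).toNat / 2 : ℕ) : ℤ) + 1) = 4 * g - r by omega,
      Int.modEq_iff_dvd]
    exact ⟨1, by ring⟩

section Interval

def reflectDir (m x d : ℤ) : ℤ := if x = 0 then 1 else if x = m then -1 else d

def unfoldCoord (m x d : ℤ) : ℤ := reflectDir m x d * x

variable {m x d : ℤ}

lemma reflectDir_eq_one_or_neg_one (hd : d = 1 ∨ d = -1) :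
    reflectDir m x d = 1 ∨ reflectDir m x d = -1 := by
  unfold reflectDir
  split_ifs <;> simp [hd]

lemma odd_reflectDir (hd : d = 1 ∨ d = -1) : Odd (reflectDir m x d) := by
  rcases reflectDir_eq_one_or_neg_one (m := m) (x := x) hd with h | h <;> rw [h] <;> decide

lemma reflectDir_zero (m d : ℤ) : reflectDir m 0 d = 1 := if_pos rfl

lemma reflectDir_self (hm : m ≠ 0) (d : ℤ) : reflectDir m m d = -1 := by
  rw [reflectDir, if_neg hm, if_pos rfl]

lemma reflectDir_of_ne (h0 : x ≠ 0) (hm : x ≠ m) (d : ℤ) : reflectDir m x d = d := by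
  rw [reflectDir, if_neg h0, if_neg hm]

lemma reflectDir_cases (hm : m ≠ 0) (hx : x ∈ Set.Icc 0 m) (hd : d = 1 ∨ d = -1) :
    (reflectDir m x d = 1 ∧ x < m) ∨ (reflectDir m x d = -1 ∧ 0 < x) := by
  obtain ⟨h0, h1⟩ := hx
  by_cases hx0 : x = 0
  · subst hx0; rw [reflectDir_zero]; omega
  by_cases hxm : x = m
  · subst hxm; rw [reflectDir_self hm]; omega
  rw [reflectDir_of_ne hx0 hxm]; omega

lemma add_reflectDir_mem_Icc (hm : m ≠ 0) (hx : x ∈ Set.Icc 0 m) (hd : d = 1 ∨ d = -1) :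
    x + reflectDir m x d ∈ Set.Icc 0 m := by
  obtain ⟨h0, h1⟩ := hx
  rcases reflectDir_cases hm ⟨h0, h1⟩ hd with ⟨he, _⟩ | ⟨he, _⟩ <;> rw [he] <;>
    constructor <;> omega

lemma odd_add_reflectDir_iff (hd : d = 1 ∨ d = -1) : Odd (x + reflectDir m x d) ↔ ¬Odd x := by
  have he : ¬Even (reflectDir m x d) := Int.not_even_iff_odd.mpr (odd_reflectDir hd)
  rw [Int.odd_add]
  tauto

lemma unfoldCoord_step (hm : m ≠ 0) (hx : x ≤ m) (hd : d = 1 ∨ d = -1) :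
    unfoldCoord m (x + reflectDir m x d) (reflectDir m x d) ≡ unfoldCoord m x d + 1
      [ZMOD 2 * m] := by
  have he := reflectDir_eq_one_or_neg_one (m := m) (x := x) hd
  have he2 : reflectDir m x d * reflectDir m x d = 1 := by rcases he with h | h <;> rw [h] <;> rfl
  unfold unfoldCoord
  set e := reflectDir m x d
  by_cases h0 : x + e = 0
  · have : e * x + 1 = 0 := by linear_combination e * h0 - he2
    rw [h0, reflectDir_zero, mul_zero, this]
  by_cases hxm : x + e = m
  · have he1 : e = 1 := by omega
    rw [hxm, reflectDir_self hm, he1, Int.modEq_iff_dvd]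
    exact ⟨1, by linarith⟩
  · rw [reflectDir_of_ne h0 hxm, mul_add, he2]

lemma unfoldCoord_neg (m x d : ℤ) : unfoldCoord m x (-d) ≡ -unfoldCoord m x d [ZMOD 2 * m] := by
  unfold unfoldCoord
  by_cases hx0 : x = 0
  · subst hx0; simp [Int.ModEq.refl]
  by_cases hxm : x = m
  · subst hxm
    rw [reflectDir_self hx0, reflectDir_self hx0, Int.modEq_iff_dvd]
    exact ⟨1, by ring⟩
  · rw [reflectDir_of_ne hx0 hxm, reflectDir_of_ne hx0 hxm, neg_mul]

/-- The unfolded coordinate lies in `[-m, m)`, a fundamental domain of `ℤ / 2m`, and its sign is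
the outgoing direction. -/
lemma eq_and_reflectDir_eq_of_unfoldCoord_modEq {x' d' : ℤ} (hm : m ≠ 0) (hx : x ∈ Set.Icc 0 m)
    (hx' : x' ∈ Set.Icc 0 m) (hd : d = 1 ∨ d = -1) (hd' : d' = 1 ∨ d' = -1)
    (h : unfoldCoord m x d ≡ unfoldCoord m x' d' [ZMOD 2 * m]) :
    x = x' ∧ reflectDir m x d = reflectDir m x' d' := by
  obtain ⟨h0, h1⟩ := hx
  obtain ⟨h0', h1'⟩ := hx'
  rcases reflectDir_cases hm ⟨h0, h1⟩ hd with ⟨he, _⟩ | ⟨he, _⟩ <;>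
    rcases reflectDir_cases hm ⟨h0', h1'⟩ hd' with ⟨he', _⟩ | ⟨he', _⟩ <;>
    rw [unfoldCoord, unfoldCoord, he, he'] at h <;> rw [he, he'] <;>
    have := Int.eq_zero_of_abs_lt_dvd (Int.modEq_iff_dvd.mp h) (abs_lt.mpr ⟨by omega, by omega⟩) <;>
    constructor <;> omega

end Interval

variable {p q : ℕ}

lemma mcStep_none (p q : ℕ) (s : (ℤ × ℤ) × (ℤ × ℤ)) :
    mcStep p q (fun _ => none) s =
      ((s.1.1 + reflectDir (2 * p) s.1.1 s.2.1, s.1.2 + reflectDir (2 * q) s.1.2 s.2.2),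
        (reflectDir (2 * p) s.1.1 s.2.1, reflectDir (2 * q) s.1.2 s.2.2)) := rfl

lemma mcValid_mcStep (hp : 0 < p) (hq : 0 < q) {s : (ℤ × ℤ) × (ℤ × ℤ)} (hs : MCValid p q s) :
    MCValid p q (mcStep p q (fun _ => none) s) := by
  obtain ⟨hx₀, hx₁, hy₀, hy₁, hpar, hdx, hdy⟩ := hs
  obtain ⟨hx₀', hx₁'⟩ := add_reflectDir_mem_Icc (by omega) ⟨hx₀, hx₁⟩ hdx
  obtain ⟨hy₀', hy₁'⟩ := add_reflectDir_mem_Icc (by omega) ⟨hy₀, hy₁⟩ hdy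
  refine ⟨hx₀', hx₁', hy₀', hy₁', ?_, reflectDir_eq_one_or_neg_one hdx,
    reflectDir_eq_one_or_neg_one hdy⟩
  simp only [mcStep_none, odd_add_reflectDir_iff hdx, odd_add_reflectDir_iff hdy]
  tauto

lemma mcValid_reverse {s : (ℤ × ℤ) × (ℤ × ℤ)} (hs : MCValid p q s) : MCValid p q (s.1, -s.2) := by
  obtain ⟨hx₀, hx₁, hy₀, hy₁, hpar, hdx, hdy⟩ := hs
  refine ⟨hx₀, hx₁, hy₀, hy₁, hpar, ?_, ?_⟩ <;> simp only [Prod.fst_neg, Prod.snd_neg] <;> omega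

def unfoldX (p : ℕ) (s : (ℤ × ℤ) × (ℤ × ℤ)) : ℤ := unfoldCoord (2 * p) s.1.1 s.2.1

def unfoldY (q : ℕ) (s : (ℤ × ℤ) × (ℤ × ℤ)) : ℤ := unfoldCoord (2 * q) s.1.2 s.2.2

/-- In the unfolded plane a trajectory is a line of slope `1`; this is its intercept. -/
def intercept (p q : ℕ) (s : (ℤ × ℤ) × (ℤ × ℤ)) : ℤ := unfoldY q s - unfoldX p s

lemma unfoldX_mcStep (hp : 0 < p) {s : (ℤ × ℤ) × (ℤ × ℤ)} (hs : MCValid p q s) :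
    unfoldX p (mcStep p q (fun _ => none) s) ≡ unfoldX p s + 1 [ZMOD 2 * (2 * p)] :=
  unfoldCoord_step (by omega) hs.2.1 hs.2.2.2.2.2.1

lemma unfoldY_mcStep (hq : 0 < q) {s : (ℤ × ℤ) × (ℤ × ℤ)} (hs : MCValid p q s) :
    unfoldY q (mcStep p q (fun _ => none) s) ≡ unfoldY q s + 1 [ZMOD 2 * (2 * q)] :=
  unfoldCoord_step (by omega) hs.2.2.2.1 hs.2.2.2.2.2.2

lemma four_mul_gcd_dvd_left (p q : ℕ) : (4 * p.gcd q : ℤ) ∣ 2 * (2 * p) := by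
  rw [← mul_assoc]
  exact mul_dvd_mul (by norm_num) (Int.natCast_dvd_natCast.mpr (Nat.gcd_dvd_left p q))

lemma four_mul_gcd_dvd_right (p q : ℕ) : (4 * p.gcd q : ℤ) ∣ 2 * (2 * q) := by
  rw [← mul_assoc]
  exact mul_dvd_mul (by norm_num) (Int.natCast_dvd_natCast.mpr (Nat.gcd_dvd_right p q))

lemma intercept_mcStep (hp : 0 < p) (hq : 0 < q) {s : (ℤ × ℤ) × (ℤ × ℤ)} (hs : MCValid p q s) :
    intercept p q (mcStep p q (fun _ => none) s) ≡ intercept p q s [ZMOD 4 * p.gcd q] := by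
  have hX := (unfoldX_mcStep hp hs).of_dvd (four_mul_gcd_dvd_left p q)
  have hY := (unfoldY_mcStep hq hs).of_dvd (four_mul_gcd_dvd_right p q)
  simpa only [intercept, add_sub_add_right_eq_sub] using hY.sub hX

lemma intercept_reverse (s : (ℤ × ℤ) × (ℤ × ℤ)) :
    intercept p q (s.1, -s.2) ≡ -intercept p q s [ZMOD 4 * p.gcd q] := by
  have hX := (unfoldCoord_neg (2 * p) s.1.1 s.2.1).of_dvd (four_mul_gcd_dvd_left p q)
  have hY := (unfoldCoord_neg (2 * q) s.1.2 s.2.2).of_dvd (four_mul_gcd_dvd_right p q)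
  simpa only [intercept, unfoldX, unfoldY, Prod.fst_neg, Prod.snd_neg, neg_sub, neg_sub_neg]
    using hY.sub hX

lemma odd_intercept {s : (ℤ × ℤ) × (ℤ × ℤ)} (hs : MCValid p q s) : Odd (intercept p q s) := by
  obtain ⟨-, -, -, -, hpar, hdx, hdy⟩ := hs
  simp only [intercept, unfoldY, unfoldX, unfoldCoord, Int.odd_sub, ← Int.not_odd_iff_even,
    Int.odd_mul, odd_reflectDir hdx, odd_reflectDir hdy, true_and]
  tauto

lemma mcStep_eq_of_unfold_modEq (hp : 0 < p) (hq : 0 < q) {a b : (ℤ × ℤ) × (ℤ × ℤ)}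
    (ha : MCValid p q a) (hb : MCValid p q b) (hX : unfoldX p a ≡ unfoldX p b [ZMOD 2 * (2 * p)])
    (hY : unfoldY q a ≡ unfoldY q b [ZMOD 2 * (2 * q)]) :
    mcStep p q (fun _ => none) a = mcStep p q (fun _ => none) b := by
  obtain ⟨ax₀, ax₁, ay₀, ay₁, -, adx, ady⟩ := ha
  obtain ⟨bx₀, bx₁, by₀, by₁, -, bdx, bdy⟩ := hb
  obtain ⟨hx, hex⟩ :=
    eq_and_reflectDir_eq_of_unfoldCoord_modEq (by omega) ⟨ax₀, ax₁⟩ ⟨bx₀, bx₁⟩ adx bdx hX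
  obtain ⟨hy, hey⟩ :=
    eq_and_reflectDir_eq_of_unfoldCoord_modEq (by omega) ⟨ay₀, ay₁⟩ ⟨by₀, by₁⟩ ady bdy hY
  rw [mcStep_none, mcStep_none, hex, hey, hx, hy]

abbrev State (p q : ℕ) := {s : (ℤ × ℤ) × (ℤ × ℤ) // MCValid p q s}

def step (hp : 0 < p) (hq : 0 < q) (s : State p q) : State p q :=
  ⟨mcStep p q (fun _ => none) s.1, mcValid_mcStep hp hq s.2⟩

def reverse (s : State p q) : State p q := ⟨(s.1.1, -s.1.2), mcValid_reverse s.2⟩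

local notation "Connected" => Relation.EqvGen (mcRel _ _ fun _ => none)

lemma connected_step (hp : 0 < p) (hq : 0 < q) (s : State p q) : Connected s (step hp hq s) :=
  .rel _ _ (Or.inl rfl)

lemma connected_reverse (s : State p q) : Connected s (reverse s) :=
  .rel _ _ (Or.inr ⟨rfl, (neg_neg _).symm⟩)

lemma connected_iterate_step (hp : 0 < p) (hq : 0 < q) (s : State p q) (n : ℕ) :
    Connected s ((step hp hq)^[n] s) := by
  induction n with
  | zero => exact .refl s
  | succ n ih =>
    rw [Function.iterate_succ_apply']
    exact ih.trans _ _ _ (connected_step hp hq _)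

/-- Along the forward orbit both unfolded coordinates advance in unison, so by the Chinese
remainder theorem some iterate of `a` has the unfolded coordinates of `b`, hence the same
successor. -/
lemma connected_of_intercept_modEq (hp : 0 < p) (hq : 0 < q) (a b : State p q)
    (h : intercept p q a.1 ≡ intercept p q b.1 [ZMOD 4 * p.gcd q]) : Connected a b := by
  have hgcd : Int.gcd (2 * (2 * p)) (2 * (2 * q)) = 4 * p.gcd q := by
    rw [Int.gcd_mul_left, Int.gcd_mul_left, Int.gcd_natCast_natCast]
    ring
  have hcompat : unfoldX p b.1 - unfoldX p a.1 ≡ unfoldY q b.1 - unfoldY q a.1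
      [ZMOD Int.gcd (2 * (2 * p)) (2 * (2 * q))] := by
    rw [hgcd, Int.modEq_iff_dvd]
    obtain ⟨t, ht⟩ := Int.modEq_iff_dvd.mp h
    simp only [intercept] at ht
    exact ⟨t, by push_cast; linear_combination ht⟩
  obtain ⟨n, hnX, hnY⟩ := exists_natCast_modEq_and_modEq (by omega) (by omega) hcompat
  set w := (step hp hq)^[n] a
  have hX : unfoldX p w.1 ≡ unfoldX p b.1 [ZMOD 2 * (2 * p)] :=
    calc unfoldX p w.1 ≡ unfoldX p a.1 + n [ZMOD 2 * (2 * p)] :=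
          iterate_modEq_add _ (fun s => unfoldX p s.1) (fun s => unfoldX_mcStep hp s.2) a n
      _ ≡ unfoldX p a.1 + (unfoldX p b.1 - unfoldX p a.1) [ZMOD 2 * (2 * p)] := hnX.add_left _
      _ = unfoldX p b.1 := add_sub_cancel _ _
  have hY : unfoldY q w.1 ≡ unfoldY q b.1 [ZMOD 2 * (2 * q)] :=
    calc unfoldY q w.1 ≡ unfoldY q a.1 + n [ZMOD 2 * (2 * q)] :=
          iterate_modEq_add _ (fun s => unfoldY q s.1) (fun s => unfoldY_mcStep hq s.2) a n
      _ ≡ unfoldY q a.1 + (unfoldY q b.1 - unfoldY q a.1) [ZMOD 2 * (2 * q)] := hnY.add_left _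
      _ = unfoldY q b.1 := add_sub_cancel _ _
  have hw : step hp hq w = step hp hq b :=
    Subtype.ext (mcStep_eq_of_unfold_modEq hp hq w.2 b.2 hX hY)
  have hwb : Connected w b := by
    have := (connected_step hp hq b).symm
    rw [← hw] at this
    exact (connected_step hp hq w).trans _ _ _ this
  exact (connected_iterate_step hp hq a n).trans _ _ _ hwb

def canonicalState (hq : 0 < q) (i : Fin (p.gcd q)) : State p q :=
  ⟨((0, 2 * i + 1), (1, 1)), by
    have := Nat.le_of_dvd hq (Nat.gcd_dvd_right p q)
    unfold MCValid
    dsimp only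
    refine ⟨le_rfl, by positivity, by positivity, by omega, ?_, Or.inl rfl, Or.inl rfl⟩
    simp only [Int.odd_iff]
    omega⟩

lemma intercept_canonicalState (hq : 0 < q) (i : Fin (p.gcd q)) :
    intercept p q (canonicalState hq i).1 = 2 * i + 1 := by
  simp only [canonicalState, intercept, unfoldY, unfoldX, unfoldCoord]
  rw [reflectDir_of_ne (by omega) (by omega)]
  ring

def componentInvariant (p q : ℕ) (s : State p q) : Set (ZMod (4 * p.gcd q)) :=
  {(intercept p q s.1 : ZMod (4 * p.gcd q)), -(intercept p q s.1 : ZMod (4 * p.gcd q))}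

lemma componentInvariant_eq_of_mcRel (hp : 0 < p) (hq : 0 < q) {a b : State p q}
    (h : mcRel p q (fun _ => none) a b) : componentInvariant p q a = componentInvariant p q b := by
  unfold componentInvariant
  rcases h with h | ⟨h₁, h₂⟩
  · have hb : (intercept p q b.1 : ZMod (4 * p.gcd q)) = intercept p q a.1 := by
      rw [← h, ZMod.intCast_eq_intCast_iff]
      exact_mod_cast intercept_mcStep hp hq a.2
    rw [hb]
  · have ha : (intercept p q a.1 : ZMod (4 * p.gcd q)) = -intercept p q b.1 := by
      rw [show a.1 = (b.1.1, -b.1.2) from Prod.ext h₁ h₂, ← Int.cast_neg,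
        ZMod.intCast_eq_intCast_iff]
      exact_mod_cast intercept_reverse b.1
    rw [ha, neg_neg, Set.pair_comm]

def canonicalComponent (hq : 0 < q) (i : Fin (p.gcd q)) : Quot (mcRel p q fun _ => none) :=
  Quot.mk _ (canonicalState hq i)

lemma canonicalComponent_injective (hp : 0 < p) (hq : 0 < q) :
    Function.Injective (canonicalComponent (p := p) hq) := by
  intro i j h
  have hinv := congrArg
    (Quot.lift (componentInvariant p q) fun _ _ ↦ componentInvariant_eq_of_mcRel hp hq) h
  simp only [canonicalComponent, componentInvariant, intercept_canonicalState] at hinv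
  have key : ((2 * i + 1 : ℤ) : ZMod (4 * p.gcd q)) = ((2 * j + 1 : ℤ) : ZMod (4 * p.gcd q)) ∨
      ((2 * i + 1 : ℤ) : ZMod (4 * p.gcd q)) = ((-(2 * j + 1) : ℤ) : ZMod (4 * p.gcd q)) := by
    rw [Int.cast_neg]
    rcases Set.pair_eq_pair_iff.mp hinv with ⟨h, -⟩ | ⟨h, -⟩
    exacts [Or.inl h, Or.inr h]
  simp only [ZMod.intCast_eq_intCast_iff, Nat.cast_mul, Nat.cast_ofNat] at key
  exact Fin.ext (eq_of_modEq_or_modEq_neg i.2 j.2 key)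

lemma canonicalComponent_surjective (hp : 0 < p) (hq : 0 < q) :
    Function.Surjective (canonicalComponent (p := p) hq) := by
  rintro ⟨s⟩
  obtain ⟨i, hi | hi⟩ :=
    exists_modEq_or_neg_modEq (Nat.gcd_pos_of_pos_left q hp) (odd_intercept s.2)
  · refine ⟨i, Quot.eqvGen_sound (connected_of_intercept_modEq hp hq _ _ ?_)⟩
    rw [intercept_canonicalState]
    exact hi.symm
  · refine ⟨i, Quot.eqvGen_sound (.symm _ _ ((connected_reverse s).trans _ _ _
      (connected_of_intercept_modEq hp hq _ _ ?_)))⟩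
    rw [intercept_canonicalState]
    exact (intercept_reverse s.1).trans hi

end MirrorCurve

open MirrorCurve in
/-- The number of closed components of the mirror-curve obtained from the rectangular grid
`RG[p,q]` with no internal mirrors equals `gcd(p, q)`. -/
theorem mcComponents_no_mirrors (p q : ℕ) (hp : 0 < p) (hq : 0 < q) :
    mcComponents p q (fun _ => none) = Nat.gcd p q := by
  rw [mcComponents, ← Nat.card_eq_of_bijective _
    ⟨canonicalComponent_injective hp hq, canonicalComponent_surjective hp hq⟩, Nat.card_fin]
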